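/- Let C be a classical case model whose formulas use only ¬, ∧, ∨, and let C_{BD△} be its BD△ counterpart (replace every variable p by t(p), preserving the preorder). Then an argument ⟨φ,χ⟩ is classically coherent (resp. classically presumptively valid, classically conclusive) in C iff ⟨φ^t, χ^t⟩ is strongly coherent (resp. strongly presumptively valid, strongly conclusive) in C_{BD△}. -/

import Mathlib

inductive BDForm : Type
  | var : ℕ → BDForm
  | neg : BDForm → BDForm
  | and : BDForm → BDForm → BDForm
  | or : BDForm → BDForm → BDForm
  | delta : BDForm → BDForm
deriving DecidableEq

structure BDModel where
  W : Type
  vp : ℕ → W → Prop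
  vm : ℕ → W → Prop

def BDModel.sat (M : BDModel) : Bool → BDForm → M.W → Prop
  | true, .var p, w => M.vp p w
  | false, .var p, w => M.vm p w
  | b, .neg φ, w => M.sat (!b) φ w
  | true, .and φ ψ, w => M.sat true φ w ∧ M.sat true ψ w
  | false, .and φ ψ, w => M.sat false φ w ∨ M.sat false ψ w
  | true, .or φ ψ, w => M.sat true φ w ∨ M.sat true ψ w
  | false, .or φ ψ, w => M.sat false φ w ∧ M.sat false ψ w
  | true, .delta φ, w => M.sat true φ w
  | false, .delta φ, w => ¬ M.sat true φ w

/-- BD△ entailment: positive extension inclusion and reverse negative inclusion, in every model. -/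
def Entails (φ χ : BDForm) : Prop :=
  ∀ (M : BDModel) (w : M.W),
    (M.sat true φ w → M.sat true χ w) ∧ (M.sat false χ w → M.sat false φ w)

/-- the value-detecting formulas -/
def tF (φ : BDForm) : BDForm := (φ.delta).and ((φ.neg.delta).neg)
def bF (φ : BDForm) : BDForm := (φ.delta).and (φ.neg.delta)
def nF (φ : BDForm) : BDForm := ((φ.delta).neg).and ((φ.neg.delta).neg)
def fF (φ : BDForm) : BDForm := ((φ.delta).neg).and (φ.neg.delta)

def topF : BDForm := ((BDForm.var 0).delta).or (((BDForm.var 0).delta).neg)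
def botF : BDForm := topF.neg
/-- A BD△ case model: a finite set of pairwise incompatible non-trivial formulas
with a total preorder on it. -/
structure CaseModel where
  C : Finset BDForm
  pre : BDForm → BDForm → Prop
  refl : ∀ ψ ∈ C, pre ψ ψ
  trans : ∀ ψ ∈ C, ∀ χ ∈ C, ∀ τ ∈ C, pre ψ χ → pre χ τ → pre ψ τ
  total : ∀ ψ ∈ C, ∀ χ ∈ C, pre ψ χ ∨ pre χ ψ
  nontriv : ∀ ψ ∈ C, ¬ Entails ψ botF
  incomp : ∀ ψ ∈ C, ∀ χ ∈ C, ψ ≠ χ → Entails (ψ.and χ) botF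

def posCoherent (𝒞 : CaseModel) (φ χ : BDForm) : Prop :=
  ∃ ψ ∈ 𝒞.C, Entails ψ (φ.and χ.delta)

def negCoherent (𝒞 : CaseModel) (φ χ : BDForm) : Prop :=
  ∃ ψ ∈ 𝒞.C, Entails ψ (φ.and χ.neg.delta.neg)

def strCoherent (𝒞 : CaseModel) (φ χ : BDForm) : Prop :=
  ∃ ψ ∈ 𝒞.C, Entails ψ (φ.and (tF χ))

def posPresValid (𝒞 : CaseModel) (φ χ : BDForm) : Prop :=
  ∃ ψ ∈ 𝒞.C, Entails ψ (φ.and χ.delta) ∧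
    ∀ ψ' ∈ 𝒞.C, Entails ψ' φ → 𝒞.pre ψ' ψ

def negPresValid (𝒞 : CaseModel) (φ χ : BDForm) : Prop :=
  ∃ ψ ∈ 𝒞.C, Entails ψ (φ.and χ.neg.delta.neg) ∧
    ∀ ψ' ∈ 𝒞.C, Entails ψ' φ → 𝒞.pre ψ' ψ

def strPresValid (𝒞 : CaseModel) (φ χ : BDForm) : Prop :=
  ∃ ψ ∈ 𝒞.C, Entails ψ (φ.and (tF χ)) ∧
    ∀ ψ' ∈ 𝒞.C, Entails ψ' φ → 𝒞.pre ψ' ψ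

def posConclusive (𝒞 : CaseModel) (φ χ : BDForm) : Prop :=
  posCoherent 𝒞 φ χ ∧ ∀ ψ ∈ 𝒞.C, Entails ψ φ → Entails ψ (φ.and χ.delta)

def negConclusive (𝒞 : CaseModel) (φ χ : BDForm) : Prop :=
  negCoherent 𝒞 φ χ ∧ ∀ ψ ∈ 𝒞.C, Entails ψ φ → Entails ψ (φ.and χ.neg.delta.neg)

def strConclusive (𝒞 : CaseModel) (φ χ : BDForm) : Prop :=
  strCoherent 𝒞 φ χ ∧ ∀ ψ ∈ 𝒞.C, Entails ψ φ → Entails ψ (φ.and (tF χ))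
/-- φ contains no occurrence of △ -/
def noDelta : BDForm → Prop
  | .var _ => True
  | .neg φ => noDelta φ
  | .and φ χ => noDelta φ ∧ noDelta χ
  | .or φ χ => noDelta φ ∧ noDelta χ
  | .delta _ => False

/-- classical (two-valued) valuation; on △-free formulas this is the standard one -/
def cval (v : ℕ → Bool) : BDForm → Bool
  | .var p => v p
  | .neg φ => !cval v φ
  | .and φ χ => cval v φ && cval v χ
  | .or φ χ => cval v φ || cval v χ
  | .delta φ => cval v φ

def CPLEntails (τ τ' : BDForm) : Prop :=
  ∀ v : ℕ → Bool, cval v τ = true → cval v τ' = true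

/-- replace every variable p by t(p) = △p ∧ ¬△¬p -/
def subT : BDForm → BDForm
  | .var p => tF (.var p)
  | .neg φ => (subT φ).neg
  | .and φ χ => (subT φ).and (subT χ)
  | .or φ χ => (subT φ).or (subT χ)
  | .delta φ => (subT φ).delta

/-- a classical case model: finitely many pairwise incompatible, classically satisfiable
△-free formulas, with a total preorder -/
structure ClCaseModel where
  C : Finset BDForm
  nodelta : ∀ ψ ∈ C, noDelta ψ
  satisfiable : ∀ ψ ∈ C, ∃ v, cval v ψ = true
  incomp : ∀ ψ ∈ C, ∀ χ ∈ C, ψ ≠ χ → ∀ v, ¬ (cval v ψ = true ∧ cval v χ = true)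
  pre : BDForm → BDForm → Prop
  refl : ∀ ψ ∈ C, pre ψ ψ
  trans : ∀ ψ ∈ C, ∀ χ ∈ C, ∀ τ ∈ C, pre ψ χ → pre χ τ → pre ψ τ
  total : ∀ ψ ∈ C, ∀ χ ∈ C, pre ψ χ ∨ pre χ ψ

def clCoherent (𝒟 : ClCaseModel) (φ χ : BDForm) : Prop :=
  ∃ ψ ∈ 𝒟.C, CPLEntails ψ (φ.and χ)

def clPresValid (𝒟 : ClCaseModel) (φ χ : BDForm) : Prop :=
  clCoherent 𝒟 φ χ ∧
    ∃ ψ ∈ 𝒟.C, CPLEntails ψ (φ.and χ) ∧ ∀ ψ' ∈ 𝒟.C, CPLEntails ψ' φ → 𝒟.pre ψ' ψ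

def clConclusive (𝒟 : ClCaseModel) (φ χ : BDForm) : Prop :=
  clCoherent 𝒟 φ χ ∧ ∀ ψ ∈ 𝒟.C, CPLEntails ψ φ → CPLEntails ψ (φ.and χ)


/-!
Read a BD△ world classically by calling a variable true when it is exactly true
(told true and not told false). For a △-free formula, the value of `σ^t` at a world is then
two-valued and coincides with the classical value of `σ` under that reading; conversely every
classical valuation arises from a one-world model. Hence `CPL` entailment between △-free formulas
is BD△ entailment between their translations; since `t` leaves a two-valued formula's values
unchanged, `ψ ⊨ φ ∧ χ` likewise becomes `ψ^t ⊨ φ^t ∧ t(χ^t)`, and all three notions transfer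
along `ψ ↦ ψ^t` from one case model to the other.
-/

namespace BDModel

noncomputable def classicalVal (M : BDModel) (w : M.W) (p : ℕ) : Bool :=
  @decide (M.vp p w ∧ ¬ M.vm p w) (Classical.propDecidable _)

def ofVal (v : ℕ → Bool) : BDModel :=
  ⟨Unit, fun p _ => v p = true, fun p _ => v p = false⟩

@[simp]
lemma classicalVal_ofVal (v : ℕ → Bool) : (ofVal v).classicalVal () = v := by
  funext p
  cases h : v p <;> simp [classicalVal, ofVal, h]

end BDModel

def Represents (φ' φ : BDForm) : Prop :=
  ∀ (M : BDModel) (w : M.W) (b : Bool), M.sat b φ' w ↔ cval (M.classicalVal w) φ = b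

namespace Represents

variable {φ φ' ψ ψ' : BDForm}

lemma tF_var (p : ℕ) : Represents (tF (.var p)) (.var p) := by
  intro M w b
  cases b <;> by_cases h : M.vp p w ∧ ¬ M.vm p w <;>
    simp only [tF, BDModel.sat, cval, BDModel.classicalVal, h, decide_false] <;>
    tauto

lemma neg (h : Represents φ' φ) : Represents φ'.neg φ.neg := by
  intro M w b
  rw [BDModel.sat, h, cval, Bool.not_eq_eq_eq_not]

lemma and (hφ : Represents φ' φ) (hψ : Represents ψ' ψ) : Represents (φ'.and ψ') (φ.and ψ) := by
  intro M w b
  cases b <;> simp only [BDModel.sat, hφ M w, hψ M w, cval] <;>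
    cases cval (M.classicalVal w) φ <;> cases cval (M.classicalVal w) ψ <;> simp

lemma or (hφ : Represents φ' φ) (hψ : Represents ψ' ψ) : Represents (φ'.or ψ') (φ.or ψ) := by
  intro M w b
  cases b <;> simp only [BDModel.sat, hφ M w, hψ M w, cval] <;>
    cases cval (M.classicalVal w) φ <;> cases cval (M.classicalVal w) ψ <;> simp

lemma tF (h : Represents φ' φ) : Represents (tF φ') φ := by
  intro M w b
  cases b <;> simp only [_root_.tF, BDModel.sat, Bool.not_true, Bool.not_false, h M w] <;>
    cases cval (M.classicalVal w) φ <;> decide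

lemma entails_iff (hφ : Represents φ' φ) (hψ : Represents ψ' ψ) :
    Entails φ' ψ' ↔ CPLEntails φ ψ := by
  constructor
  · intro hent v hv
    have hφv := hφ (BDModel.ofVal v) () true
    have hψv := hψ (BDModel.ofVal v) () true
    rw [BDModel.classicalVal_ofVal] at hφv hψv
    exact hψv.1 ((hent (BDModel.ofVal v) ()).1 (hφv.2 hv))
  · intro hcpl M w
    simp only [hφ M w, hψ M w]
    refine ⟨hcpl _, fun hψf => ?_⟩
    cases hφv : cval (M.classicalVal w) φ
    · rfl
    · simpa [hψf] using hcpl _ hφv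

end Represents

lemma represents_subT {σ : BDForm} (hσ : noDelta σ) : Represents (subT σ) σ := by
  induction σ with
  | var p => exact Represents.tF_var p
  | neg φ ih => exact (ih hσ).neg
  | and φ ψ ihφ ihψ => exact (ihφ hσ.1).and (ihψ hσ.2)
  | or φ ψ ihφ ihψ => exact (ihφ hσ.1).or (ihψ hσ.2)
  | delta φ _ => exact hσ.elim

lemma entails_subT_iff {α β : BDForm} (hα : noDelta α) (hβ : noDelta β) :
    Entails (subT α) (subT β) ↔ CPLEntails α β :=
  (represents_subT hα).entails_iff (represents_subT hβ)

lemma entails_subT_and_tF_iff {α φ χ : BDForm} (hα : noDelta α) (hφ : noDelta φ)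
    (hχ : noDelta χ) :
    Entails (subT α) ((subT φ).and (tF (subT χ))) ↔ CPLEntails α (φ.and χ) :=
  (represents_subT hα).entails_iff ((represents_subT hφ).and (represents_subT hχ).tF)

/-- an argument is classically coherent (presumptively valid, conclusive)
in a classical case model iff its t-translation is strongly coherent (strongly
presumptively valid, strongly conclusive) in the BD△ counterpart. -/
theorem stmt14 (𝒟 : ClCaseModel) (φ χ : BDForm)
    (hφ : noDelta φ) (hχ : noDelta χ) (𝒞 : CaseModel)
    (hC : 𝒞.C = 𝒟.C.image subT)
    (hpre : ∀ a ∈ 𝒟.C, ∀ b ∈ 𝒟.C, (𝒟.pre a b ↔ 𝒞.pre (subT a) (subT b))) :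
    (clCoherent 𝒟 φ χ ↔ strCoherent 𝒞 (subT φ) (subT χ)) ∧
    (clPresValid 𝒟 φ χ ↔ strPresValid 𝒞 (subT φ) (subT χ)) ∧
    (clConclusive 𝒟 φ χ ↔ strConclusive 𝒞 (subT φ) (subT χ)) := by
  have hsupports : ∀ ψ ∈ 𝒟.C,
      Entails (subT ψ) ((subT φ).and (tF (subT χ))) ↔ CPLEntails ψ (φ.and χ) :=
    fun ψ hψ => entails_subT_and_tF_iff (𝒟.nodelta ψ hψ) hφ hχ
  have hpremise : ∀ ψ ∈ 𝒟.C, Entails (subT ψ) (subT φ) ↔ CPLEntails ψ φ :=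
    fun ψ hψ => entails_subT_iff (𝒟.nodelta ψ hψ) hφ
  have hmaximal : ∀ ψ ∈ 𝒟.C, (∀ ψ' ∈ 𝒞.C, Entails ψ' (subT φ) → 𝒞.pre ψ' (subT ψ)) ↔
      ∀ ψ' ∈ 𝒟.C, CPLEntails ψ' φ → 𝒟.pre ψ' ψ := by
    intro ψ hψ
    rw [hC, Finset.forall_mem_image]
    exact forall₂_congr fun ψ' hψ' => imp_congr (hpremise ψ' hψ') (hpre ψ' hψ' ψ hψ).symm
  have hcoherent : clCoherent 𝒟 φ χ ↔ strCoherent 𝒞 (subT φ) (subT χ) := by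
    rw [clCoherent, strCoherent, hC, Finset.exists_mem_image]
    exact exists_congr fun ψ => and_congr_right fun hψ => (hsupports ψ hψ).symm
  refine ⟨hcoherent, ?_, ?_⟩
  · rw [clPresValid, strPresValid, hC, Finset.exists_mem_image, ← hC,
      and_iff_right_of_imp fun ⟨ψ, hψ, hent, _⟩ => ⟨ψ, hψ, hent⟩]
    exact exists_congr fun ψ => and_congr_right fun hψ =>
      and_congr (hsupports ψ hψ).symm (hmaximal ψ hψ).symm
  · rw [clConclusive, strConclusive, ← hcoherent, hC, Finset.forall_mem_image]
    exact and_congr_right' <| forall₂_congr fun ψ hψ =>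
      imp_congr (hpremise ψ hψ).symm (hsupports ψ hψ).symm
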